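/- arXiv:0811.4033 — 4 statements merged into one kernel-verified Lean document; each statement's English description precedes it below -/
import Mathlib

section
/- Let A and B be circulant l×l matrices over F_q with polynomials a(t), b(t). Then the ml×ml block matrix formed as the product of the ml×l block column [A; A; …; A] (m copies) with the l×ml block row [B^T, B^T, …, B^T] (m copies) is a circulant ml×ml matrix whose corresponding polynomial is a(t)·â_rev(t)·Σ_{i=0}^{m−1} t^{il} mod (t^{ml}−1), where â_rev denotes b̂(t), the polynomial of B^T. -/
/-!
Every `l × l` block of the product is `A Bᵀ`, which is circulant with first row the cyclic
convolution `c = a ⋆ b̂`; hence the product is circulant with first row `c` repeated `m` times,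
whose polynomial is `c(t) · ∑_{i<m} t^{il}`. Since `t^{ml} - 1 = (t^l - 1) · ∑_{i<m} t^{il}` and
`a(t) b̂(t) ≡ c(t)` modulo `t^l - 1`, the congruence follows.
-/

open Polynomial Matrix

noncomputable def circOf {F : Type*} [Semiring F] {l : ℕ} (a : Fin l → F) :
    Matrix (Fin l) (Fin l) F :=
  Matrix.of fun i j => a (j - i)

noncomputable def polyOf {F : Type*} [Semiring F] {l : ℕ} (a : Fin l → F) : Polynomial F :=
  ∑ i : Fin l, Polynomial.C (a i) * Polynomial.X ^ (i : ℕ)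

noncomputable def hatPoly {F : Type*} [Semiring F] (l : ℕ) (p : Polynomial F) : Polynomial F :=
  ∑ j ∈ Finset.range l, Polynomial.C (p.coeff j) * Polynomial.X ^ ((l - j) % l)

theorem Fin.modNat_sub {m n : ℕ} (i j : Fin (m * n)) :
    (i - j).modNat = i.modNat - j.modNat := by
  ext
  simp only [Fin.coe_modNat, Fin.val_sub, Nat.mod_mod_of_dvd _ (Dvd.intro_left m rfl)]
  rw [← ZMod.natCast_eq_natCast_iff']
  have hn : 0 < n := Nat.pos_of_mul_pos_left j.pos
  push_cast [j.isLt.le, (Nat.mod_lt _ hn).le]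
  simp

theorem pow_sub_one_dvd_pow_sub_pow_mod {R : Type*} [CommRing R] (x : R) (l e : ℕ) :
    x ^ l - 1 ∣ x ^ e - x ^ (e % l) := by
  have h : x ^ (e % l) * (x ^ (l * (e / l)) - 1) = x ^ e - x ^ (e % l) := by
    rw [mul_sub, mul_one, ← pow_add, Nat.mod_add_div]
  exact h ▸ dvd_mul_of_dvd_right (pow_one_sub_dvd_pow_mul_sub_one x l _) _

section

variable {F : Type*}

def cyclicConv [Semiring F] {l : ℕ} (f g : Fin l → F) : Fin l → F :=
  fun r => ∑ i, f i * g (r - i)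

theorem circOf_submatrix_modNat [Semiring F] {m l : ℕ} (c : Fin l → F) :
    (circOf c).submatrix Fin.modNat Fin.modNat = circOf fun d : Fin (m * l) => c d.modNat := by
  ext i j
  simp [circOf, Fin.modNat_sub]

theorem circOf_mul_transpose_circOf [Semiring F] {l : ℕ} [NeZero l] (a b : Fin l → F) :
    circOf a * (circOf b)ᵀ = circOf (cyclicConv a fun j => b (-j)) := by
  ext i j
  simp only [circOf, cyclicConv, mul_apply, transpose_apply, of_apply]
  refine Fintype.sum_equiv (Equiv.subRight i) _ _ fun k => ?_
  simp only [Equiv.subRight_apply]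
  congr 2
  abel

theorem polyOf_coeff [Semiring F] {l : ℕ} (a : Fin l → F) (j : Fin l) :
    (polyOf a).coeff j = a j := by
  simp [polyOf, coeff_C_mul, coeff_X_pow, Fin.val_eq_val]

theorem hatPoly_polyOf [Semiring F] {l : ℕ} [NeZero l] (b : Fin l → F) :
    hatPoly l (polyOf b) = polyOf fun j => b (-j) := by
  rw [hatPoly, ← Fin.sum_univ_eq_sum_range fun j => C ((polyOf b).coeff j) * X ^ ((l - j) % l)]
  simp only [polyOf_coeff]
  refine Fintype.sum_equiv (Equiv.neg _) _ _ fun j => ?_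
  simp [Fin.val_neg']

theorem polyOf_comp_modNat [Semiring F] {m l : ℕ} (c : Fin l → F) :
    polyOf (fun d : Fin (m * l) => c d.modNat) = polyOf c * ∑ i ∈ Finset.range m, X ^ (i * l) := by
  rw [polyOf, polyOf, ← finProdFinEquiv.sum_comp, Fintype.sum_prod_type, Finset.sum_comm,
    ← Fin.sum_univ_eq_sum_range, Finset.sum_mul_sum]
  refine Finset.sum_congr rfl fun r _ => Finset.sum_congr rfl fun q _ => ?_
  have hmod : (finProdFinEquiv (q, r)).modNat = r := by ext; simp [Nat.mod_eq_of_lt r.isLt]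
  rw [hmod, finProdFinEquiv_apply_val, pow_add, mul_comm l, mul_assoc]

theorem X_pow_sub_one_dvd_polyOf_mul_sub_cyclicConv [CommRing F] {l : ℕ} [NeZero l]
    (f g : Fin l → F) :
    (X : F[X]) ^ l - 1 ∣ polyOf f * polyOf g - polyOf (cyclicConv f g) := by
  have hmul : polyOf f * polyOf g = ∑ i, ∑ j, C (f i * g j) * X ^ ((i : ℕ) + j) := by
    simp only [polyOf, Finset.sum_mul_sum, C_mul, pow_add]
    exact Finset.sum_congr rfl fun i _ => Finset.sum_congr rfl fun j _ => by ring
  have hconv : polyOf (cyclicConv f g) = ∑ i, ∑ j, C (f i * g j) * X ^ ((i + j : Fin l) : ℕ) := by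
    simp only [polyOf, cyclicConv, map_sum, Finset.sum_mul]
    rw [Finset.sum_comm]
    exact Finset.sum_congr rfl fun i _ =>
      Fintype.sum_equiv (Equiv.subRight i) _ _ fun r => by simp
  rw [hmul, hconv, ← Finset.sum_sub_distrib]
  refine Finset.dvd_sum fun i _ => ?_
  rw [← Finset.sum_sub_distrib]
  refine Finset.dvd_sum fun j _ => ?_
  rw [← mul_sub, Fin.val_add]
  exact dvd_mul_of_dvd_right (pow_sub_one_dvd_pow_sub_pow_mod _ _ _) _

end

theorem stmt3_general (F : Type*) [Field F] (m l : ℕ) (hl : 0 < l)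
    (a b : Fin l → F) :
    ∃ c : Fin (m * l) → F,
      (Matrix.of fun (i : Fin (m * l)) (j : Fin l) => circOf a i.modNat j) *
          (Matrix.of fun (i : Fin l) (j : Fin (m * l)) => (circOf b)ᵀ i j.modNat)
        = circOf c ∧
      ((X : Polynomial F) ^ (m * l) - 1) ∣
        (polyOf a * hatPoly l (polyOf b) * (∑ i ∈ Finset.range m, (X : Polynomial F) ^ (i * l))
          - polyOf c) := by
  have : NeZero l := ⟨hl.ne'⟩
  set c := cyclicConv a fun j => b (-j)
  refine ⟨fun d => c d.modNat, ?_, ?_⟩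
  · rw [← circOf_submatrix_modNat, ← circOf_mul_transpose_circOf,
      ← submatrix_mul_equiv _ _ _ (Equiv.refl _)]
    rfl
  · have hfactor : (X : F[X]) ^ (m * l) - 1 = (X ^ l - 1) * ∑ i ∈ Finset.range m, X ^ (i * l) := by
      simp_rw [pow_mul']
      rw [mul_comm, geom_sum_mul]
    rw [hatPoly_polyOf, polyOf_comp_modNat, ← sub_mul, hfactor]
    exact mul_dvd_mul_right (X_pow_sub_one_dvd_polyOf_mul_sub_cyclicConv _ _) _

/-- the `ml×l` block column `[A; …; A]` times the `l×ml` block row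
`[Bᵀ, …, Bᵀ]` is a circulant `ml×ml` matrix with polynomial
`a(t)·b(t)·∑_{i<m} t^{il} mod (t^{ml}−1)`. -/
theorem stmt3 (F : Type*) [Field F] [Fintype F] (m l : ℕ) (hm : 0 < m) (hl : 0 < l)
    (a b : Fin l → F) :
    ∃ c : Fin (m * l) → F,
      (Matrix.of fun (i : Fin (m * l)) (j : Fin l) => circOf a i.modNat j) *
          (Matrix.of fun (i : Fin l) (j : Fin (m * l)) => (circOf b)ᵀ i j.modNat)
        = circOf c ∧
      ((X : Polynomial F) ^ (m * l) - 1) ∣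
        (polyOf a * hatPoly l (polyOf b) * (∑ i ∈ Finset.range m, (X : Polynomial F) ^ (i * l))
          - polyOf c) :=
  stmt3_general F m l hl a b
end

section
/- Let C̄ ⊆ F_q[t]^m be the submodule associated to a GQC code C with orbit lengths l_1,…,l_m, and let {g_1,…,g_m} be a POT Gröbner basis with diagonal degrees d_i = deg g_{ii}. Then every element c ∈ C̄ can be written as c = P_1(t)g_1 + ⋯ + P_m(t)g_m with P_i ∈ F_q[t], and the dimension of C over F_q equals Σ_{i=1}^m (l_i − d_i). -/
/-!
Elimination along the triangular basis. If `c ∈ C̄` vanishes before position `k`, then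
`g_kk ∣ c_k`, since otherwise `c - (c_k / g_kk) • g_k` would have leading position `k` and a
leading term smaller than that of `g_k`; subtracting a multiple of `g_k` clears position `k`,
which gives generation.

For the dimension, first reduce `c_k` modulo `t^{l_k} - 1` using `(t^{l_k} - 1) e_k ∈ C̄`:
the multiplier of `g_k` then has degree `< l_k - d_k`. So `v ↦ π (∑ v_i • g_i)`, on coefficient
vectors with `deg v_i < l_i - d_i`, maps onto `π(C̄)`. It is injective: if every entry of the
triangular combination `∑ v_i • g_i` is divisible by `t^{l_i} - 1`, its diagonal entries
`v_i g_ii`, of degree `< l_i`, vanish one after the other.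
-/

open Polynomial

noncomputable def stdGen {F : Type*} [CommRing F] {m : ℕ} (l : Fin m → ℕ) (i : Fin m) :
    Fin m → Polynomial F :=
  fun j => if j = i then Polynomial.X ^ (l i) - 1 else 0

theorem forall_mem_by_elimination {M : Type*} [Zero M] {m : ℕ} {S : Set (Fin m → M)}
    {Q : (Fin m → M) → Prop} (zero : Q 0)
    (step : ∀ k : Fin m, ∀ c ∈ S, (∀ j < k, c j = 0) →
      ∃ c' ∈ S, (∀ j ≤ k, c' j = 0) ∧ (Q c' → Q c)) :
    ∀ c ∈ S, Q c := by
  suffices h : ∀ n ≤ m, ∀ c ∈ S, (∀ j : Fin m, j < n → c j = 0) → Q c from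
    fun c hc => h 0 m.zero_le c hc fun j hj => absurd hj j.val.not_lt_zero
  intro n hn
  induction hn using Nat.decreasingInduction with
  | self => exact fun c _ hc => (funext fun j => hc j j.isLt : c = 0) ▸ zero
  | of_succ k hk ih =>
    intro c hc hzero
    obtain ⟨c', hc', hzero', hQ⟩ := step ⟨k, hk⟩ c hc hzero
    exact hQ (ih c' hc' fun j hj => hzero' j (Nat.lt_succ_iff.mp hj))

section

variable {K : Type*} [Field K] {m : ℕ}

/-- Gröbner basis condition for the position-over-term order: the leading position of `c` is
its first nonzero entry, and `g i` has the least leading term among the elements of `C` with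
leading position `i`. -/
structure IsTriangularGroebnerBasis (C : Submodule K[X] (Fin m → K[X]))
    (g : Fin m → Fin m → K[X]) : Prop where
  mem : ∀ i, g i ∈ C
  apply_eq_zero_of_lt : ∀ i j, j < i → g i j = 0
  apply_self_ne_zero : ∀ i, g i i ≠ 0
  degree_le : ∀ i, ∀ c ∈ C, (∀ j < i, c j = 0) → c i ≠ 0 → (g i i).degree ≤ (c i).degree

noncomputable def quotientPi (f : Fin m → K[X]) :
    (Fin m → K[X]) →ₗ[K] ((i : Fin m) → K[X] ⧸ Ideal.span {f i}) :=
  LinearMap.pi fun i =>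
    (Ideal.Quotient.mkₐ K (Ideal.span {f i})).toLinearMap.comp (LinearMap.proj i)

theorem quotientPi_eq_zero_iff {f : Fin m → K[X]} {x : Fin m → K[X]} :
    quotientPi f x = 0 ↔ ∀ i, f i ∣ x i := by
  simp only [funext_iff, Pi.zero_apply, ← Ideal.mem_span_singleton]
  exact forall_congr' fun _ => Ideal.Quotient.eq_zero_iff_mem

noncomputable def reducedCombination (f : Fin m → K[X]) (g : Fin m → Fin m → K[X]) :
    ((i : Fin m) → degreeLT K ((f i).natDegree - (g i i).natDegree)) →ₗ[K]
      ((i : Fin m) → K[X] ⧸ Ideal.span {f i}) :=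
  quotientPi f ∘ₗ (Fintype.linearCombination K[X] g).restrictScalars K ∘ₗ
    LinearMap.piMap fun _ => (degreeLT K _).subtype

variable {f : Fin m → K[X]} {g : Fin m → Fin m → K[X]}

theorem reducedCombination_apply
    (v : (i : Fin m) → degreeLT K ((f i).natDegree - (g i i).natDegree)) :
    reducedCombination f g v = quotientPi f (∑ i, (v i : K[X]) • g i) := by
  simp [reducedCombination, Fintype.linearCombination_apply]

theorem reducedCombination_single (k : Fin m)
    (v : degreeLT K ((f k).natDegree - (g k k).natDegree)) :
    reducedCombination f g (Pi.single k v) = quotientPi f ((v : K[X]) • g k) := by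
  rw [reducedCombination_apply, Finset.sum_eq_single k (fun i _ hik => by simp [hik]) (by simp)]
  simp

theorem injective_reducedCombination (htri : ∀ i j, j < i → g i j = 0) (hne : ∀ i, g i i ≠ 0) :
    Function.Injective (reducedCombination f g) := by
  rw [← LinearMap.ker_eq_bot, LinearMap.ker_eq_bot']
  intro v hv
  rw [reducedCombination_apply, quotientPi_eq_zero_iff] at hv
  suffices h : ∀ i, (v i : K[X]) = 0 from funext fun i => Subtype.ext (h i)
  intro i
  induction i using WellFoundedLT.induction with
  | _ i ih =>
    have hentry : (∑ j, (v j : K[X]) • g j) i = v i * g i i := by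
      rw [Finset.sum_apply, Finset.sum_eq_single i]
      · rfl
      · intro j _ hji
        rcases hji.lt_or_gt with hj | hj
        · simp [ih j hj]
        · simp [htri j i hj]
      · simp
    by_contra hvi
    have hdeg : (v i : K[X]).natDegree < (f i).natDegree - (g i i).natDegree :=
      (natDegree_lt_iff_degree_lt hvi).2 (mem_degreeLT.1 (v i).2)
    refine mul_ne_zero hvi (hne i) (eq_zero_of_dvd_of_natDegree_lt (hentry ▸ hv i) ?_)
    rw [natDegree_mul hvi (hne i)]
    omega

namespace IsTriangularGroebnerBasis

variable {C : Submodule K[X] (Fin m → K[X])} (hg : IsTriangularGroebnerBasis C g)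
include hg

theorem dvd_apply {c : Fin m → K[X]} (hc : c ∈ C) {k : Fin m} (hk : ∀ j < k, c j = 0) :
    g k k ∣ c k := by
  rw [← EuclideanDomain.mod_eq_zero]
  by_contra hr
  have hrem : (c - (c k / g k k) • g k) k = c k % g k k := by
    simp [EuclideanDomain.mod_eq_sub_mul_div, mul_comm]
  have hmem : c - (c k / g k k) • g k ∈ C := C.sub_mem hc (C.smul_mem _ (hg.mem k))
  have hle := hg.degree_le k _ hmem (fun j hj => by simp [hk j hj, hg.apply_eq_zero_of_lt k j hj])
    (hrem ▸ hr)
  exact (hrem ▸ hle).not_gt (degree_mod_lt _ (hg.apply_self_ne_zero k))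

theorem span_range_eq : Submodule.span K[X] (Set.range g) = C := by
  refine le_antisymm (Submodule.span_le.2 (Set.range_subset_iff.2 hg.mem)) fun c hc => ?_
  refine forall_mem_by_elimination (Submodule.zero_mem _) (fun k c hc hk => ?_) c hc
  obtain ⟨q, hq⟩ := hg.dvd_apply hc hk
  refine ⟨c - q • g k, C.sub_mem hc (C.smul_mem _ (hg.mem k)), fun j hj => ?_, fun h => ?_⟩
  · rcases hj.lt_or_eq with hj | rfl
    · simp [hk j hj, hg.apply_eq_zero_of_lt k j hj]
    · simp [hq, mul_comm]
  · simpa using add_mem h (Submodule.smul_mem _ q (Submodule.subset_span ⟨k, rfl⟩))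

theorem exists_sub_smul_single_sub_smul_eq_zero {k : Fin m} (hf : f k ≠ 0)
    (hsingle : Pi.single k (f k) ∈ C) {c : Fin m → K[X]} (hc : c ∈ C) (hk : ∀ j < k, c j = 0) :
    ∃ u : K[X], ∃ v ∈ degreeLT K ((f k).natDegree - (g k k).natDegree),
      ∀ j ≤ k, (c - u • Pi.single k (f k) - v • g k : Fin m → K[X]) j = 0 := by
  have hzero : ∀ j < k, (c - (c k / f k) • Pi.single k (f k) : Fin m → K[X]) j = 0 :=
    fun j hj => by simp [hk j hj, hj.ne]
  obtain ⟨v, hv⟩ := hg.dvd_apply (C.sub_mem hc (C.smul_mem _ hsingle)) hzero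
  have hmod : g k k * v = c k % f k := by
    simp [← hv, EuclideanDomain.mod_eq_sub_mul_div, mul_comm]
  refine ⟨c k / f k, v, ?_, fun j hj => ?_⟩
  · rw [mem_degreeLT]
    rcases eq_or_ne v 0 with rfl | hv0
    · simp
    have hne : g k k * v ≠ 0 := mul_ne_zero (hg.apply_self_ne_zero k) hv0
    have hlt : (g k k * v).natDegree < (f k).natDegree :=
      natDegree_lt_natDegree hne (hmod ▸ degree_mod_lt _ hf)
    rw [natDegree_mul (hg.apply_self_ne_zero k) hv0] at hlt
    rw [← natDegree_lt_iff_degree_lt hv0]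
    omega
  · rcases hj.lt_or_eq with hj | rfl
    · simp [hk j hj, hj.ne, hg.apply_eq_zero_of_lt k j hj]
    · rw [Pi.sub_apply, hv]
      simp [mul_comm]

theorem range_reducedCombination (hf : ∀ i, f i ≠ 0) (hsingle : ∀ i, Pi.single i (f i) ∈ C) :
    LinearMap.range (reducedCombination f g) = (C.restrictScalars K).map (quotientPi f) := by
  refine le_antisymm ?_ ?_
  · rintro _ ⟨v, rfl⟩
    rw [reducedCombination_apply]
    exact Submodule.mem_map_of_mem (C.sum_mem fun i _ => C.smul_mem _ (hg.mem i))
  rintro _ ⟨c, hc, rfl⟩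
  refine forall_mem_by_elimination (Q := fun c => quotientPi f c ∈ LinearMap.range _)
    (zero_mem _) (fun k c hc hk => ?_) c hc
  obtain ⟨u, v, hv, hzero⟩ := hg.exists_sub_smul_single_sub_smul_eq_zero (hf k) (hsingle k) hc hk
  refine ⟨_, C.sub_mem (C.sub_mem hc (C.smul_mem _ (hsingle k))) (C.smul_mem _ (hg.mem k)),
    hzero, fun h => ?_⟩
  have hsingle_zero : quotientPi f (u • Pi.single k (f k)) = 0 :=
    quotientPi_eq_zero_iff.2 fun j => by
      rcases eq_or_ne j k with rfl | hjk
      · simp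
      · simp [hjk]
  have hsplit : quotientPi f c = quotientPi f (c - u • Pi.single k (f k) - v • g k) +
      reducedCombination f g (Pi.single k ⟨v, hv⟩) := by
    rw [reducedCombination_single, ← map_add, sub_add_cancel, map_sub, hsingle_zero, sub_zero]
  exact hsplit ▸ add_mem h (LinearMap.mem_range_self _ _)

theorem finrank_map_quotientPi (hf : ∀ i, f i ≠ 0) (hsingle : ∀ i, Pi.single i (f i) ∈ C) :
    Module.finrank K ((C.restrictScalars K).map (quotientPi f)) =
      ∑ i, ((f i).natDegree - (g i i).natDegree) := by
  rw [← hg.range_reducedCombination hf hsingle,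
    LinearMap.finrank_range_of_inj
      (injective_reducedCombination hg.apply_eq_zero_of_lt hg.apply_self_ne_zero),
    (LinearEquiv.piCongrRight fun i => degreeLTEquiv K _).finrank_eq, Module.finrank_pi_fintype]
  simp

end IsTriangularGroebnerBasis

end

theorem stdGen_eq_single {R : Type*} [CommRing R] {m : ℕ} (l : Fin m → ℕ) (i : Fin m) :
    (stdGen l i : Fin m → R[X]) = Pi.single i (X ^ l i - 1) := by
  ext1 j
  simp [stdGen, Pi.single_apply]

theorem stmt7_general (F : Type*) [Field F] (m : ℕ) (l : Fin m → ℕ)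
    (hl : ∀ i, 0 < l i)
    (Cbar : Submodule (Polynomial F) (Fin m → Polynomial F))
    (hX : ∀ i, stdGen l i ∈ Cbar)
    (g : Fin m → Fin m → Polynomial F)
    (hmem : ∀ i, g i ∈ Cbar)
    (htri : ∀ i j, j < i → g i j = 0)
    (hne : ∀ i, g i i ≠ 0)
    (hmin : ∀ i, ∀ c ∈ Cbar, (∀ j, j < i → c j = 0) → c i ≠ 0 →
      (g i i).degree ≤ (c i).degree) :
    (∀ c ∈ Cbar, ∃ P : Fin m → Polynomial F, c = ∑ i, P i • g i) ∧
    Module.finrank F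
        ((Cbar.restrictScalars F).map
          (LinearMap.pi fun i : Fin m =>
            (Ideal.Quotient.mkₐ F (Ideal.span {(X : Polynomial F) ^ (l i) - 1})).toLinearMap.comp
              (LinearMap.proj i)))
      = ∑ i : Fin m, (l i - (g i i).natDegree) := by
  have hg : IsTriangularGroebnerBasis Cbar g := ⟨hmem, htri, hne, hmin⟩
  refine ⟨fun c hc => ?_, ?_⟩
  · obtain ⟨P, hP⟩ := (Submodule.mem_span_range_iff_exists_fun _).1 (hg.span_range_eq ▸ hc)
    exact ⟨P, hP.symm⟩
  · have hf : ∀ i, (X ^ l i - 1 : F[X]) ≠ 0 := fun i => by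
      simpa using X_pow_sub_C_ne_zero (hl i) (1 : F)
    have hdeg : ∀ i, (X ^ l i - 1 : F[X]).natDegree = l i := fun i => by
      simpa using natDegree_X_pow_sub_C (n := l i) (r := (1 : F))
    have h := hg.finrank_map_quotientPi hf fun i => stdGen_eq_single (R := F) l i ▸ hX i
    simp only [hdeg] at h
    exact h

/-- a POT Gröbner basis generates `C̄` (every element is a polynomial
combination `∑ P_i g_i`), and the `F_q`-dimension of the corresponding code
`C = π(C̄) ⊆ M = ⊕_i F_q[t]/(t^{l i}−1)` equals `∑ (l i − deg g_{ii})`. -/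
theorem stmt7 (F : Type*) [Field F] [Fintype F] (m : ℕ) (l : Fin m → ℕ)
    (hl : ∀ i, 0 < l i)
    (Cbar : Submodule (Polynomial F) (Fin m → Polynomial F))
    (hX : ∀ i, stdGen l i ∈ Cbar)
    (g : Fin m → Fin m → Polynomial F)
    (hmem : ∀ i, g i ∈ Cbar)
    (htri : ∀ i j, j < i → g i j = 0)
    (hne : ∀ i, g i i ≠ 0)
    (hdvd : ∀ i, g i i ∣ (X : Polynomial F) ^ (l i) - 1)
    (hmin : ∀ i, ∀ c ∈ Cbar, (∀ j, j < i → c j = 0) → c i ≠ 0 →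
      (g i i).degree ≤ (c i).degree) :
    (∀ c ∈ Cbar, ∃ P : Fin m → Polynomial F, c = ∑ i, P i • g i) ∧
    Module.finrank F
        ((Cbar.restrictScalars F).map
          (LinearMap.pi fun i : Fin m =>
            (Ideal.Quotient.mkₐ F (Ideal.span {(X : Polynomial F) ^ (l i) - 1})).toLinearMap.comp
              (LinearMap.proj i)))
      = ∑ i : Fin m, (l i - (g i i).natDegree) :=
  stmt7_general F m l hl Cbar hX g hmem htri hne hmin
end

section
/- Let {h_1,…,h_m} be the reduced rPOT Gröbner basis of C̄^⊥ (lower-triangular, h_{ii} monic dividing t^{l_i}−1, deg h_{ij} < deg h_{jj} for j < i). Define the lower-triangular polynomial matrix A = (a_{ij}) recursively by a_{ii} = (t^{l_i}−1)/h_{ii} and a_{ij} = −(1/h_{jj})·Σ_{δ=j+1}^{i} a_{iδ} h_{δj} for j < i. Then A·(h_{ij}) = diag(t^{l_1}−1, …, t^{l_m}−1), and deg a_{ij} < deg a_{ii} for all i > j. -/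
/-!
Since both matrices are lower triangular, the `(i, j)` entry of `A·H` only involves indices
`δ ∈ [j, i]`, and for `j < i` the recursion defining `a i j` is exactly the vanishing of that
entry. The degree bound follows by descending induction on `j`: in the recursion each term
`a i δ * h δ j` has degree `< deg a i i + deg h j j`, because `deg a i δ ≤ deg a i i` (induction)
and `deg h δ j < deg h j j` (reducedness); cancelling `deg h j j` gives `deg a i j < deg a i i`.
-/

open Polynomial

open Classical in
/-- The lcm `l` of the orbit lengths `l i` for which `u i` and `v i` are both nonzero. -/
noncomputable def suppLcm {F : Type*} [Semiring F] {m : ℕ} (l : Fin m → ℕ)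
    (u v : Fin m → Polynomial F) : ℕ :=
  Finset.lcm (Finset.univ.filter fun i => u i ≠ 0 ∧ v i ≠ 0) l

/-- The scalar product `⟨u,v⟩ = ∑_i u_i(t)·v_i(t)·∑_{k<l/l_i} t^{k l_i}`. -/
noncomputable def scalarProd {F : Type*} [Semiring F] {m : ℕ} (l : Fin m → ℕ)
    (u v : Fin m → Polynomial F) : Polynomial F :=
  ∑ i : Fin m, u i * hatPoly (l i) (v i) *
    ∑ k ∈ Finset.range (suppLcm l u v / l i), Polynomial.X ^ (k * l i)

/-- The standard inner product of the codewords corresponding to the polynomial vectors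
`u` and `v` (coefficients of the reductions modulo `t^{l i} − 1`). -/
noncomputable def pairing {F : Type*} [Field F] {m : ℕ} (l : Fin m → ℕ)
    (u v : Fin m → Polynomial F) : F :=
  ∑ i : Fin m, ∑ j ∈ Finset.range (l i),
    ((u i) %ₘ (Polynomial.X ^ (l i) - 1)).coeff j *
      ((v i) %ₘ (Polynomial.X ^ (l i) - 1)).coeff j

open Finset

theorem degree_mul_lt_degree_add_degree {R : Type*} [Semiring R] {p q P Q : R[X]}
    (hp : p.degree ≤ P.degree) (hq : q.degree < Q.degree) (hP : P ≠ 0) :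
    (p * q).degree < P.degree + Q.degree :=
  (degree_mul_le p q).trans_lt <|
    (add_le_add hp le_rfl).trans_lt (WithBot.add_lt_add_left (degree_ne_bot.mpr hP) hq)

section LowerTriangular

variable {ι R : Type*} [LinearOrder ι] [LocallyFiniteOrder ι]

theorem sum_mul_eq_sum_Icc_of_lowerTriangular [Fintype ι] [NonUnitalNonAssocSemiring R]
    {a h : ι → ι → R} (hatri : ∀ i j, i < j → a i j = 0) (htri : ∀ i j, i < j → h i j = 0)
    (i j : ι) : ∑ δ, a i δ * h δ j = ∑ δ ∈ Icc j i, a i δ * h δ j := by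
  refine (sum_subset (subset_univ _) fun δ _ hδ => ?_).symm
  rcases not_and_or.mp (mem_Icc.not.mp hδ) with hjδ | hδi
  · rw [htri δ j (not_le.mp hjδ), mul_zero]
  · rw [hatri i δ (not_le.mp hδi), zero_mul]

theorem sum_mul_eq_ite_of_lowerTriangular [Fintype ι] [NonUnitalNonAssocRing R]
    {a h : ι → ι → R} {d : ι → R} (hatri : ∀ i j, i < j → a i j = 0)
    (htri : ∀ i j, i < j → h i j = 0) (hadiag : ∀ i, a i i * h i i = d i)
    (harec : ∀ i j, j < i → a i j * h j j = -∑ δ ∈ Ioc j i, a i δ * h δ j) (i j : ι) :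
    ∑ δ, a i δ * h δ j = if i = j then d i else 0 := by
  rw [sum_mul_eq_sum_Icc_of_lowerTriangular hatri htri]
  rcases lt_trichotomy i j with hij | rfl | hji
  · rw [if_neg hij.ne, Icc_eq_empty_of_lt hij, sum_empty]
  · rw [if_pos rfl, Icc_self, sum_singleton, hadiag]
  · rw [if_neg hji.ne', ← Ioc_insert_left hji.le, sum_insert left_notMem_Ioc, harec i j hji,
      neg_add_cancel]

theorem degree_lt_degree_diag_of_recursion [Ring R] [NoZeroDivisors R] [WellFoundedGT ι]
    {a h : ι → ι → R[X]} {i : ι} (hai : a i i ≠ 0) (hh : ∀ j, h j j ≠ 0)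
    (hred : ∀ i j, j < i → (h i j).degree < (h j j).degree)
    (harec : ∀ j, j < i → a i j * h j j = -∑ δ ∈ Ioc j i, a i δ * h δ j) (j : ι) :
    j < i → (a i j).degree < (a i i).degree := by
  induction j using WellFoundedGT.induction with | _ j ih => ?_
  intro hji
  have hterm : ∀ δ ∈ Ioc j i, (a i δ * h δ j).degree < (a i i).degree + (h j j).degree := by
    intro δ hδ
    rw [mem_Ioc] at hδ
    refine degree_mul_lt_degree_add_degree ?_ (hred δ j hδ.1) hai
    rcases hδ.2.lt_or_eq with hδi | rfl
    · exact (ih δ hδ.1 hδi).le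
    · exact le_rfl
  have hbot : ⊥ < (a i i).degree + (h j j).degree := by
    rw [← degree_mul, bot_lt_iff_ne_bot, degree_ne_bot]
    exact mul_ne_zero hai (hh j)
  have hsum : (a i j * h j j).degree < (a i i).degree + (h j j).degree := by
    rw [harec j hji, degree_neg]
    exact (degree_sum_le _ _).trans_lt ((Finset.sup_lt_iff hbot).mpr hterm)
  rw [degree_mul] at hsum
  exact lt_of_add_lt_add_right hsum

end LowerTriangular

theorem stmt11_general (F : Type*) [Field F] (m : ℕ) (l : Fin m → ℕ)
    (hl : ∀ i, 0 < l i)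
    (h a : Fin m → Fin m → Polynomial F)
    (htri : ∀ i j : Fin m, i < j → h i j = 0)
    (hmonic : ∀ i, (h i i).Monic)
    (hred : ∀ i j : Fin m, j < i → (h i j).degree < (h j j).degree)
    (hatri : ∀ i j : Fin m, i < j → a i j = 0)
    (hadiag : ∀ i, a i i * h i i = (X : Polynomial F) ^ (l i) - 1)
    (harec : ∀ i j : Fin m, j < i →
      a i j * h j j = -∑ δ ∈ Finset.Ioc j i, a i δ * h δ j) :
    (∀ i j : Fin m,
      ∑ δ : Fin m, a i δ * h δ j =
        if i = j then (X : Polynomial F) ^ (l i) - 1 else 0) ∧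
    (∀ i j : Fin m, j < i → (a i j).degree < (a i i).degree) := by
  have hadiag_ne : ∀ i, a i i ≠ 0 := fun i hai =>
    X_pow_sub_C_ne_zero (hl i) (1 : F) (by rw [C_1, ← hadiag i, hai, zero_mul])
  exact ⟨sum_mul_eq_ite_of_lowerTriangular hatri htri hadiag harec,
    fun i => degree_lt_degree_diag_of_recursion (hadiag_ne i) (fun j => (hmonic j).ne_zero) hred
      (harec i)⟩

/-- for the reduced rPOT Gröbner basis `{h_i}` (lower triangular, `h_{ii}` monic
dividing `t^{l_i}−1`, `deg h_{ij} < deg h_{jj}` for `j<i`), the matrix `A = (a_{ij})` defined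
by the recursion `a_{ii} = (t^{l_i}−1)/h_{ii}`,
`a_{ij} = −(1/h_{jj})·∑_{δ=j+1}^{i} a_{iδ} h_{δj}` satisfies
`A·(h_{ij}) = diag(t^{l_1}−1,…,t^{l_m}−1)` and `deg a_{ij} < deg a_{ii}` for `i > j`. -/
theorem stmt11 (F : Type*) [Field F] [Fintype F] (m : ℕ) (l : Fin m → ℕ)
    (hl : ∀ i, 0 < l i)
    (h a : Fin m → Fin m → Polynomial F)
    (htri : ∀ i j : Fin m, i < j → h i j = 0)
    (hmonic : ∀ i, (h i i).Monic)
    (hdvd : ∀ i, h i i ∣ (X : Polynomial F) ^ (l i) - 1)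
    (hred : ∀ i j : Fin m, j < i → (h i j).degree < (h j j).degree)
    (hatri : ∀ i j : Fin m, i < j → a i j = 0)
    (hadiag : ∀ i, a i i * h i i = (X : Polynomial F) ^ (l i) - 1)
    (harec : ∀ i j : Fin m, j < i →
      a i j * h j j = -∑ δ ∈ Finset.Ioc j i, a i δ * h δ j) :
    (∀ i j : Fin m,
      ∑ δ : Fin m, a i δ * h δ j =
        if i = j then (X : Polynomial F) ^ (l i) - 1 else 0) ∧
    (∀ i j : Fin m, j < i → (a i j).degree < (a i i).degree) :=
  stmt11_general F m l hl h a htri hmonic hred hatri hadiag harec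
end

section
/- Let {g_1,…,g_m} be the reduced POT Gröbner basis of C̄ for a GQC code C of dimension k, with x_i := l_i − deg g_{ii} − 1. Then the k×n matrix whose rows are the codewords corresponding to t^δ g_i for 0 ≤ δ ≤ x_i and 1 ≤ i ≤ m (interpreted in M) has linearly independent rows and is a generator matrix of C. -/
open Polynomial

/-- The codeword in `F_q^n` (`n = ∑ l i`, coordinates `Σ i, Fin (l i)`) corresponding to a
polynomial vector, by coefficient expansion of the reduction modulo `t^{l i} − 1`. -/
noncomputable def toWord {F : Type*} [Field F] {m : ℕ} (l : Fin m → ℕ)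
    (c : Fin m → Polynomial F) : (Σ i : Fin m, Fin (l i)) → F :=
  fun s => ((c s.1) %ₘ (Polynomial.X ^ (l s.1) - 1)).coeff (s.2 : ℕ)

/-! A vector is sent to the zero word exactly when each entry `c i` is divisible by
`t ^ l i - 1`. A linear relation among the rows is a vector `∑ q i • g i` with
`deg q i < l i - deg g i i` and zero word; by triangularity its first nonzero entry is
`q i * g i i`, of degree `< l i` yet divisible by `t ^ l i - 1`, which is absurd.
Conversely, for `c ∈ C` vanishing before column `i`, subtracting a multiple of `stdGen l i`
(which does not change the word) reduces `c i` modulo `t ^ l i - 1`, and subtracting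
`q • g i` with `q = c i /ₘ g i i` then clears column `i` by minimality of `g i i`; the
degree bound on `q` puts the word of `q • g i` in the span of the rows. Induct on `i`. -/

namespace Polynomial

variable {R : Type*}

theorem monic_X_pow_sub_one [Ring R] {n : ℕ} (hn : n ≠ 0) : (X ^ n - 1 : R[X]).Monic := by
  simpa using monic_X_pow_sub_C (1 : R) hn

theorem degree_X_pow_sub_one [Ring R] [Nontrivial R] {n : ℕ} (hn : 0 < n) :
    (X ^ n - 1 : R[X]).degree = n := by
  simpa using degree_X_pow_sub_C hn (1 : R)

theorem modByMonic_X_pow_sub_one_mem_degreeLT [Ring R] [Nontrivial R] (p : R[X]) {n : ℕ}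
    (hn : 0 < n) : p %ₘ (X ^ n - 1) ∈ degreeLT R n :=
  mem_degreeLT.2 <|
    (degree_modByMonic_lt p (monic_X_pow_sub_one hn.ne')).trans_eq (degree_X_pow_sub_one hn)

theorem mem_degreeLT_sub_natDegree_iff [Semiring R] [NoZeroDivisors R] {p q : R[X]} (hq : q ≠ 0)
    {n : ℕ} : p ∈ degreeLT R (n - q.natDegree) ↔ p * q ∈ degreeLT R n := by
  rcases eq_or_ne p 0 with rfl | hp
  · simp
  rw [mem_degreeLT, mem_degreeLT, degree_mul, degree_eq_natDegree hp, degree_eq_natDegree hq]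
  norm_cast
  omega

end Polynomial

section GeneratorMatrix

variable {F : Type*} [Field F] {m : ℕ} (l : Fin m → ℕ)

noncomputable def toWordₗ : (Fin m → F[X]) →ₗ[F] (Σ i : Fin m, Fin (l i)) → F where
  toFun := toWord l
  map_add' c d := by
    funext s
    simp [toWord, add_modByMonic]
  map_smul' a c := by
    funext s
    simp [toWord, smul_modByMonic]

@[simp]
theorem toWordₗ_apply (c : Fin m → F[X]) : toWordₗ l c = toWord l c := rfl

theorem toWord_eq_zero_iff (hl : ∀ i, 0 < l i) {c : Fin m → F[X]} :
    toWord l c = 0 ↔ ∀ i, X ^ l i - 1 ∣ c i := by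
  simp only [funext_iff, Sigma.forall, toWord, Pi.zero_apply,
    ← modByMonic_eq_zero_iff_dvd (monic_X_pow_sub_one (hl _).ne')]
  refine forall_congr' fun i => ?_
  rw [← degreeLTEquiv_eq_zero_iff_eq_zero (modByMonic_X_pow_sub_one_mem_degreeLT _ (hl i)),
    funext_iff]
  rfl

theorem toWord_smul_stdGen (hl : ∀ i, 0 < l i) (p : F[X]) (i : Fin m) :
    toWord l (p • stdGen (F := F) l i) = 0 := by
  refine (toWord_eq_zero_iff l hl).2 fun j => ?_
  by_cases hj : j = i
  · subst hj
    simp [stdGen]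
  · simp [stdGen, hj]

noncomputable def generatorRows (g : Fin m → Fin m → F[X]) :
    (Σ i : Fin m, Fin (l i - (g i i).natDegree)) → (Σ i : Fin m, Fin (l i)) → F :=
  fun p => toWord l ((X : F[X]) ^ (p.2 : ℕ) • g p.1)

noncomputable def rowSpan (g : Fin m → Fin m → F[X]) :
    Submodule F ((Σ i : Fin m, Fin (l i)) → F) :=
  Submodule.span F (Set.range (generatorRows l g))

theorem toWord_smul_mem_rowSpan (g : Fin m → Fin m → F[X]) {i : Fin m} {q : F[X]}
    (hq : q ∈ degreeLT F (l i - (g i i).natDegree)) : toWord l (q • g i) ∈ rowSpan l g := by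
  classical
  let φ := toWordₗ l ∘ₗ (LinearMap.toSpanSingleton F[X] _ (g i)).restrictScalars F
  have hle : degreeLT F (l i - (g i i).natDegree) ≤ (rowSpan l g).comap φ := by
    rw [degreeLT_eq_span_X_pow, Submodule.span_le]
    simp only [Finset.coe_image, Finset.coe_range, Set.image_subset_iff]
    intro δ hδ
    exact Submodule.subset_span ⟨⟨i, δ, hδ⟩, rfl⟩
  exact hle hq

theorem sum_smul_apply_of_triangular {g : Fin m → Fin m → F[X]} (htri : ∀ i j, j < i → g i j = 0)
    {q : Fin m → F[X]} {i : Fin m} (hq : ∀ j < i, q j = 0) :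
    (∑ j, q j • g j) i = q i * g i i := by
  rw [Finset.sum_apply, Finset.sum_eq_single i (fun j _ hji => ?_) (by simp)]
  · rfl
  rcases hji.lt_or_gt with hj | hj
  · simp [hq j hj]
  · simp [htri j i hj]

theorem eq_zero_of_toWord_sum_smul_eq_zero (hl : ∀ i, 0 < l i) {g : Fin m → Fin m → F[X]}
    (htri : ∀ i j, j < i → g i j = 0) (hmonic : ∀ i, (g i i).Monic) {q : Fin m → F[X]}
    (hq : ∀ i, q i ∈ degreeLT F (l i - (g i i).natDegree)) (h : toWord l (∑ i, q i • g i) = 0) :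
    q = 0 := by
  rw [toWord_eq_zero_iff l hl] at h
  funext i
  induction i using WellFoundedLT.induction with
  | _ i ih =>
    have hdvd := h i
    rw [sum_smul_apply_of_triangular htri ih] at hdvd
    have hdeg := mem_degreeLT.1 ((mem_degreeLT_sub_natDegree_iff (hmonic i).ne_zero).1 (hq i))
    rw [← degree_X_pow_sub_one (R := F) (hl i)] at hdeg
    exact (mul_eq_zero.1 (eq_zero_of_dvd_of_degree_lt hdvd hdeg)).resolve_right (hmonic i).ne_zero

theorem linearIndependent_generatorRows (hl : ∀ i, 0 < l i) {g : Fin m → Fin m → F[X]}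
    (htri : ∀ i j, j < i → g i j = 0) (hmonic : ∀ i, (g i i).Monic) :
    LinearIndependent F (generatorRows l g) := by
  rw [Fintype.linearIndependent_iff]
  intro a ha
  let q : ∀ i, degreeLT F (l i - (g i i).natDegree) := fun i =>
    (degreeLTEquiv F _).symm fun δ => a ⟨i, δ⟩
  have hsum : ∑ p, a p • generatorRows l g p = toWord l (∑ i, (q i : F[X]) • g i) := by
    simp only [q, degreeLTEquiv, LinearEquiv.coe_symm_mk, Finset.sum_smul, ← smul_X_eq_monomial,
      smul_assoc, ← toWordₗ_apply, map_sum, map_smul, Fintype.sum_sigma]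
    rfl
  have hq := eq_zero_of_toWord_sum_smul_eq_zero l hl htri hmonic (fun i => (q i).2) (hsum ▸ ha)
  rintro ⟨i, δ⟩
  have hqi : (degreeLTEquiv F _) (q i) = 0 := by
    rw [(degreeLTEquiv F _).map_eq_zero_iff]
    exact Subtype.ext (congrFun hq i)
  simpa [q] using congrFun hqi δ


theorem exists_sub_mem_rowSpan_of_eq_zero_lt (hl : ∀ i, 0 < l i)
    {C : Submodule F[X] (Fin m → F[X])} (hX : ∀ i, stdGen l i ∈ C)
    {g : Fin m → Fin m → F[X]} (hmem : ∀ i, g i ∈ C) (htri : ∀ i j, j < i → g i j = 0)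
    (hmonic : ∀ i, (g i i).Monic)
    (hmin : ∀ i, ∀ c ∈ C, (∀ j, j < i → c j = 0) → c i ≠ 0 → (g i i).degree ≤ (c i).degree)
    {c : Fin m → F[X]} (hc : c ∈ C) {i : Fin m} (hci : ∀ j < i, c j = 0) :
    ∃ c' ∈ C, (∀ j ≤ i, c' j = 0) ∧ toWord l c - toWord l c' ∈ rowSpan l g := by
  set M : F[X] := X ^ l i - 1
  set r := c i %ₘ M
  set q := r /ₘ g i i
  set c' := c - (c i /ₘ M) • stdGen l i - q • g i with hc'
  have hc'C : c' ∈ C := C.sub_mem (C.sub_mem hc (C.smul_mem _ (hX i))) (C.smul_mem _ (hmem i))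
  have hc'lt : ∀ j < i, c' j = 0 := fun j hj => by
    simp [hc', stdGen, hj.ne, hci j hj, htri i j hj]
  have hc'i : c' i = r %ₘ g i i := by
    simp only [hc', Pi.sub_apply, Pi.smul_apply, stdGen, if_pos, smul_eq_mul]
    linear_combination -modByMonic_add_div r (g i i) - modByMonic_add_div (c i) M
  -- `c' i` has lower degree than `g i i`, so the minimality of `g i i` forces it to vanish.
  have hr : r %ₘ g i i = 0 := by
    by_contra h
    rw [← hc'i] at h
    exact (hmin i c' hc'C hc'lt h).not_gt (hc'i ▸ degree_modByMonic_lt _ (hmonic i))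
  have hq : q ∈ degreeLT F (l i - (g i i).natDegree) := by
    rw [mem_degreeLT_sub_natDegree_iff (hmonic i).ne_zero, mul_comm]
    have hrq := modByMonic_add_div r (g i i)
    rw [hr, zero_add] at hrq
    exact hrq ▸ modByMonic_X_pow_sub_one_mem_degreeLT _ (hl i)
  refine ⟨c', hc'C, fun j hj => ?_, ?_⟩
  · rcases hj.lt_or_eq with hj | rfl
    exacts [hc'lt j hj, hc'i.trans hr]
  · have hdiff : c - c' = (c i /ₘ M) • stdGen l i + q • g i := by rw [hc']; abel
    rw [← toWordₗ_apply, ← toWordₗ_apply, ← map_sub, hdiff, map_add, toWordₗ_apply,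
      toWord_smul_stdGen l hl, zero_add, toWordₗ_apply]
    exact toWord_smul_mem_rowSpan l g hq


theorem toWord_mem_rowSpan (hl : ∀ i, 0 < l i)
    {C : Submodule F[X] (Fin m → F[X])} (hX : ∀ i, stdGen l i ∈ C)
    {g : Fin m → Fin m → F[X]} (hmem : ∀ i, g i ∈ C) (htri : ∀ i j, j < i → g i j = 0)
    (hmonic : ∀ i, (g i i).Monic)
    (hmin : ∀ i, ∀ c ∈ C, (∀ j, j < i → c j = 0) → c i ≠ 0 → (g i i).degree ≤ (c i).degree)
    {c : Fin m → F[X]} (hc : c ∈ C) : toWord l c ∈ rowSpan l g := by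
  suffices h : ∀ k : Fin (m + 1), ∀ d ∈ C, (∀ j : Fin m, j.castSucc < k → d j = 0) →
      toWord l d ∈ rowSpan l g from h 0 c hc fun j hj => absurd hj (Fin.not_lt_zero _)
  intro k
  induction k using Fin.reverseInduction with
  | last =>
    intro d _ hd
    obtain rfl : d = 0 := funext fun j => hd j (Fin.castSucc_lt_last j)
    rw [← toWordₗ_apply, map_zero]
    exact zero_mem _
  | cast i ih =>
    intro d hd hdi
    obtain ⟨d', hd'C, hd'i, hsub⟩ := exists_sub_mem_rowSpan_of_eq_zero_lt l hl hX hmem htri hmonic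
      hmin hd fun j hj => hdi j (Fin.castSucc_lt_castSucc_iff.2 hj)
    have hd' := ih d' hd'C fun j hj => hd'i j (Fin.castSucc_lt_succ_iff.1 hj)
    simpa using add_mem hsub hd'

theorem rowSpan_eq_map_toWordₗ (hl : ∀ i, 0 < l i)
    {C : Submodule F[X] (Fin m → F[X])} (hX : ∀ i, stdGen l i ∈ C)
    {g : Fin m → Fin m → F[X]} (hmem : ∀ i, g i ∈ C) (htri : ∀ i j, j < i → g i j = 0)
    (hmonic : ∀ i, (g i i).Monic)
    (hmin : ∀ i, ∀ c ∈ C, (∀ j, j < i → c j = 0) → c i ≠ 0 → (g i i).degree ≤ (c i).degree) :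
    rowSpan l g = (C.restrictScalars F).map (toWordₗ l) := by
  refine le_antisymm ?_ ?_
  · rw [rowSpan, Submodule.span_le]
    rintro _ ⟨p, rfl⟩
    exact ⟨_, C.smul_mem _ (hmem p.1), rfl⟩
  · rintro _ ⟨c, hc, rfl⟩
    exact toWord_mem_rowSpan l hl hX hmem htri hmonic hmin hc

end GeneratorMatrix

theorem stmt15_general (F : Type*) [Field F] (m : ℕ) (l : Fin m → ℕ)
    (hl : ∀ i, 0 < l i)
    (C : Submodule (Polynomial F) (Fin m → Polynomial F))
    (hX : ∀ i, stdGen l i ∈ C)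
    (g : Fin m → Fin m → Polynomial F)
    (hmem : ∀ i, g i ∈ C)
    (htri : ∀ i j, j < i → g i j = 0)
    (hmonic : ∀ i, (g i i).Monic)
    (hmin : ∀ i, ∀ c ∈ C, (∀ j, j < i → c j = 0) → c i ≠ 0 →
      (g i i).degree ≤ (c i).degree) :
    LinearIndependent F
      (fun p : Σ i : Fin m, Fin (l i - (g i i).natDegree) =>
        toWord l ((X : Polynomial F) ^ (p.2 : ℕ) • g p.1)) ∧
    (Submodule.span F
        (Set.range (fun p : Σ i : Fin m, Fin (l i - (g i i).natDegree) =>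
          toWord l ((X : Polynomial F) ^ (p.2 : ℕ) • g p.1))) :
        Set ((Σ i : Fin m, Fin (l i)) → F))
      = {v | ∃ c ∈ C, toWord l c = v} :=
  ⟨linearIndependent_generatorRows l hl htri hmonic,
    congrArg SetLike.coe (rowSpan_eq_map_toWordₗ l hl hX hmem htri hmonic hmin)⟩

/-- for the reduced POT Gröbner basis `{g_i}` of `C̄`, the `k` codewords
corresponding to `t^δ·g_i` for `0 ≤ δ ≤ x_i = l_i − deg g_{ii} − 1` are linearly independent
over `F_q` and span exactly the code `C`; i.e. they form a generator matrix of `C`. -/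
theorem stmt15 (F : Type*) [Field F] [Fintype F] (m : ℕ) (l : Fin m → ℕ)
    (hl : ∀ i, 0 < l i)
    (C : Submodule (Polynomial F) (Fin m → Polynomial F))
    (hX : ∀ i, stdGen l i ∈ C)
    (g : Fin m → Fin m → Polynomial F)
    (hmem : ∀ i, g i ∈ C)
    (htri : ∀ i j, j < i → g i j = 0)
    (hmonic : ∀ i, (g i i).Monic)
    (hdvd : ∀ i, g i i ∣ (X : Polynomial F) ^ (l i) - 1)
    (hmin : ∀ i, ∀ c ∈ C, (∀ j, j < i → c j = 0) → c i ≠ 0 →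
      (g i i).degree ≤ (c i).degree)
    (hred : ∀ i j, i < j → (g i j).degree < (g j j).degree) :
    LinearIndependent F
      (fun p : Σ i : Fin m, Fin (l i - (g i i).natDegree) =>
        toWord l ((X : Polynomial F) ^ (p.2 : ℕ) • g p.1)) ∧
    (Submodule.span F
        (Set.range (fun p : Σ i : Fin m, Fin (l i - (g i i).natDegree) =>
          toWord l ((X : Polynomial F) ^ (p.2 : ℕ) • g p.1))) :
        Set ((Σ i : Fin m, Fin (l i)) → F))
      = {v | ∃ c ∈ C, toWord l c = v} :=
  stmt15_general F m l hl C hX g hmem htri hmonic hmin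
end
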